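/- arXiv:2505.18628 — 2 statements merged into one kernel-verified Lean document; each statement's English description precedes it below -/
import Mathlib

section
/- Let n, K be positive integers, let Â ∈ M_n(ℂ) be a Hermitian positive semidefinite matrix, and let a₁, …, a_K ∈ ℂⁿ with a_k ≠ 0 for at least one k. For μ > 0 define P(μ) = Σ_{k=1}^{K} ‖(Â + μ·I)⁻¹ a_k‖², where I is the n×n identity matrix (Â + μI is positive definite, hence invertible, for every μ > 0). Then P is strictly decreasing on (0, ∞): for all μ₁ > μ₂ > 0, P(μ₁) < P(μ₂). -/
/-!
Write `R μ = (Â + μ I)⁻¹`. For `0 < μ₂ < μ₁` the resolvent identity gives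
`R μ₂ x = y + (μ₁ - μ₂) R μ₂ y` with `y = R μ₁ x`, so expanding the square,
`‖R μ₂ x‖² ≥ ‖y‖² + 2 (μ₁ - μ₂) Re ⟪y, R μ₂ y⟫`. As `R μ₂` is positive definite, the last term
is nonnegative, and positive as soon as `x ≠ 0`. Hence every summand of `P` is antitone and the
one belonging to a nonzero `a k` is strictly antitone.
-/

open Matrix Finset
open scoped ComplexOrder

open RCLike in
theorem norm_sq_add_two_mul_re_inner_le_norm_add_sq {𝕜 E : Type*} [RCLike 𝕜]
    [SeminormedAddCommGroup E] [InnerProductSpace 𝕜 E] (x y : E) :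
    ‖x‖ ^ 2 + 2 * re (inner 𝕜 x y) ≤ ‖x + y‖ ^ 2 := by
  rw [norm_add_sq (𝕜 := 𝕜)]
  linarith [sq_nonneg ‖y‖]

namespace Matrix

variable {𝕜 n : Type*} [RCLike 𝕜] [DecidableEq n]

theorem PosSemidef.posDef_add_smul_one {A : Matrix n n 𝕜} (hA : A.PosSemidef) {μ : ℝ}
    (hμ : 0 < μ) : (A + (μ : 𝕜) • 1).PosDef :=
  PosDef.posSemidef_add hA (PosDef.one.smul (RCLike.ofReal_pos.mpr hμ))

variable [Fintype n]

theorem inv_add_smul_one_sub_inv_add_smul_one {α : Type*} [CommRing α] {A : Matrix n n α}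
    {c₁ c₂ : α} (h : IsUnit (A + c₂ • 1) ↔ IsUnit (A + c₁ • 1)) :
    (A + c₂ • 1)⁻¹ - (A + c₁ • 1)⁻¹ = (c₁ - c₂) • ((A + c₂ • 1)⁻¹ * (A + c₁ • 1)⁻¹) := by
  rw [inv_sub_inv h, add_sub_add_left_eq_sub, ← sub_smul, Matrix.mul_smul, Matrix.mul_one,
    Matrix.smul_mul]

variable {A : Matrix n n 𝕜}

open RCLike in
theorem PosSemidef.sum_norm_sq_inv_add_smul_one_mulVec_le (hA : A.PosSemidef) {μ₁ μ₂ : ℝ}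
    (hμ₁ : 0 < μ₁) (hμ₂ : 0 < μ₂) (x : n → 𝕜) :
    let y := (A + (μ₁ : 𝕜) • 1)⁻¹ *ᵥ x
    ∑ i, ‖y i‖ ^ 2 + 2 * (μ₁ - μ₂) * re (star y ⬝ᵥ ((A + (μ₂ : 𝕜) • 1)⁻¹ *ᵥ y))
      ≤ ∑ i, ‖((A + (μ₂ : 𝕜) • 1)⁻¹ *ᵥ x) i‖ ^ 2 := by
  intro y
  have hsplit : (A + (μ₂ : 𝕜) • 1)⁻¹ *ᵥ x
      = y + ((μ₁ - μ₂ : ℝ) : 𝕜) • ((A + (μ₂ : 𝕜) • 1)⁻¹ *ᵥ y) := by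
    rw [← sub_eq_iff_eq_add', ← sub_mulVec, ofReal_sub, inv_add_smul_one_sub_inv_add_smul_one
      (iff_of_true (hA.posDef_add_smul_one hμ₂).isUnit (hA.posDef_add_smul_one hμ₁).isUnit),
      smul_mulVec, ← mulVec_mulVec]
  have := norm_sq_add_two_mul_re_inner_le_norm_add_sq (𝕜 := 𝕜) (WithLp.toLp 2 y)
    (WithLp.toLp 2 (((μ₁ - μ₂ : ℝ) : 𝕜) • ((A + (μ₂ : 𝕜) • 1)⁻¹ *ᵥ y)))
  simp only [← WithLp.toLp_add, ← hsplit, EuclideanSpace.norm_sq_eq,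
    EuclideanSpace.inner_toLp_toLp, dotProduct_comm _ (star y)] at this
  rwa [dotProduct_smul, smul_eq_mul, re_ofReal_mul, ← mul_assoc] at this

theorem PosSemidef.antitoneOn_sum_norm_sq_inv_add_smul_one_mulVec (hA : A.PosSemidef)
    (x : n → 𝕜) :
    AntitoneOn (fun μ : ℝ ↦ ∑ i, ‖((A + (μ : 𝕜) • 1)⁻¹ *ᵥ x) i‖ ^ 2) (Set.Ioi 0) := by
  intro μ₂ hμ₂ μ₁ hμ₁ hle
  have hgap := hA.sum_norm_sq_inv_add_smul_one_mulVec_le hμ₁ hμ₂ x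
  have hre := (hA.posDef_add_smul_one hμ₂).inv.posSemidef.re_dotProduct_nonneg
    ((A + (μ₁ : 𝕜) • 1)⁻¹ *ᵥ x)
  dsimp only at hgap ⊢
  linarith [mul_nonneg (sub_nonneg.mpr hle) hre]

theorem PosSemidef.strictAntiOn_sum_norm_sq_inv_add_smul_one_mulVec (hA : A.PosSemidef)
    {x : n → 𝕜} (hx : x ≠ 0) :
    StrictAntiOn (fun μ : ℝ ↦ ∑ i, ‖((A + (μ : 𝕜) • 1)⁻¹ *ᵥ x) i‖ ^ 2) (Set.Ioi 0) := by
  intro μ₂ hμ₂ μ₁ hμ₁ hlt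
  have hgap := hA.sum_norm_sq_inv_add_smul_one_mulVec_le hμ₁ hμ₂ x
  have hy : (A + (μ₁ : 𝕜) • 1)⁻¹ *ᵥ x ≠ 0 := fun h ↦ hx <|
    mulVec_injective_of_isUnit (hA.posDef_add_smul_one hμ₁).inv.isUnit
      (h.trans (mulVec_zero _).symm)
  have hre := (hA.posDef_add_smul_one hμ₂).inv.re_dotProduct_pos hy
  dsimp only at hgap ⊢
  linarith [mul_pos (sub_pos.mpr hlt) hre]

end Matrix

theorem power_strictly_decreasing_general {n K : ℕ}
    (A : Matrix (Fin n) (Fin n) ℂ) (hA : A.PosSemidef)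
    (a : Fin K → (Fin n → ℂ)) (ha : ∃ k, a k ≠ 0)
    (P : ℝ → ℝ)
    (hP : ∀ μ : ℝ, P μ = ∑ k : Fin K, ∑ i : Fin n,
      ‖((A + (μ : ℂ) • (1 : Matrix (Fin n) (Fin n) ℂ))⁻¹ *ᵥ a k) i‖ ^ 2) :
    ∀ μ₁ μ₂ : ℝ, 0 < μ₂ → μ₂ < μ₁ → P μ₁ < P μ₂ := by
  intro μ₁ μ₂ hμ₂ hlt
  have hμ₁ : μ₁ ∈ Set.Ioi 0 := hμ₂.trans hlt
  obtain ⟨k₀, hk₀⟩ := ha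
  rw [hP, hP]
  exact sum_lt_sum
    (fun k _ ↦ hA.antitoneOn_sum_norm_sq_inv_add_smul_one_mulVec (a k) hμ₂ hμ₁ hlt.le)
    ⟨k₀, mem_univ _, hA.strictAntiOn_sum_norm_sq_inv_add_smul_one_mulVec hk₀ hμ₂ hμ₁ hlt⟩

/-- Theorem 1: the total power `P(μ) = ∑ₖ ‖(Â + μ I)⁻¹ aₖ‖²` is strictly
decreasing on `(0, ∞)`. -/
theorem power_strictly_decreasing {n K : ℕ} (hn : 0 < n) (hK : 0 < K)
    (A : Matrix (Fin n) (Fin n) ℂ) (hA : A.PosSemidef)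
    (a : Fin K → (Fin n → ℂ)) (ha : ∃ k, a k ≠ 0)
    (P : ℝ → ℝ)
    (hP : ∀ μ : ℝ, P μ = ∑ k : Fin K, ∑ i : Fin n,
      ‖((A + (μ : ℂ) • (1 : Matrix (Fin n) (Fin n) ℂ))⁻¹ *ᵥ a k) i‖ ^ 2) :
    ∀ μ₁ μ₂ : ℝ, 0 < μ₂ → μ₂ < μ₁ → P μ₁ < P μ₂ :=
  power_strictly_decreasing_general A hA a ha P hP
end

section
/- Let K be a positive integer, g ∈ ℂ^K, σ² > 0, and fix k ∈ {1, …, K}. Define E : ℂ → ℝ by E(u) = |u|²·(Σ_{j≠k} |g_j|² + σ²) + |ū·g_k − 1|². Then log₂(1 + |g_k|² / (Σ_{j≠k} |g_j|² + σ²)) = (1/ln 2) · sup_{W > 0, u ∈ ℂ} (ln W − W·E(u) + 1), and the supremum is attained at u* = g_k / (Σ_j |g_j|² + σ²) and W* = E(u*)⁻¹. -/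
open Finset

/-!
With `S = ∑_{j≠k} |g_j|² + σ²` and `T = S + |g_k|²`, completing the square gives
`E(u) = T·|u - g_k/T|² + S/T`, so `E` is minimised at `u*` with value `S/T`.
For fixed `a > 0`, `ln W - W a + 1 ≤ -ln a` (this is `ln x ≤ x - 1` at `x = W a`), with equality
at `W = a⁻¹`. Hence the supremum equals `-ln(S/T) = ln(1 + |g_k|²/S)`.
-/

namespace Real

theorem log_sub_mul_add_one_le_neg_log {W a : ℝ} (hW : 0 < W) (ha : 0 < a) :
    log W - W * a + 1 ≤ -log a := by
  have h := log_le_sub_one_of_pos (mul_pos hW ha)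
  rw [log_mul hW.ne' ha.ne'] at h
  linarith

theorem log_inv_sub_inv_mul_add_one {a : ℝ} (ha : a ≠ 0) :
    log a⁻¹ - a⁻¹ * a + 1 = -log a := by
  rw [log_inv, inv_mul_cancel₀ ha]
  ring

theorem isGreatest_log_sub_mul_add_one {α : Type*} (E : α → ℝ) {x : α} (hx : 0 < E x)
    (hmin : ∀ u, E x ≤ E u) :
    IsGreatest {y : ℝ | ∃ W : ℝ, 0 < W ∧ ∃ u : α, y = log W - W * E u + 1}
      (log (E x)⁻¹ - (E x)⁻¹ * E x + 1) := by
  refine ⟨⟨(E x)⁻¹, inv_pos.mpr hx, x, rfl⟩, ?_⟩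
  rintro y ⟨W, hW, u, rfl⟩
  rw [log_inv_sub_inv_mul_add_one hx.ne']
  calc log W - W * E u + 1 ≤ log W - W * E x + 1 := by
        gcongr
        exact hmin u
    _ ≤ -log (E x) := log_sub_mul_add_one_le_neg_log hW hx

end Real

namespace Complex

theorem norm_sq_mul_add_norm_conj_mul_sub_one_sq (s : ℝ) (g u : ℂ) (hT : s + ‖g‖ ^ 2 ≠ 0) :
    ‖u‖ ^ 2 * s + ‖(starRingEnd ℂ) u * g - 1‖ ^ 2
      = (s + ‖g‖ ^ 2) * ‖u - g / ((s + ‖g‖ ^ 2 : ℝ) : ℂ)‖ ^ 2 + s / (s + ‖g‖ ^ 2) := by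
  set t := s + ‖g‖ ^ 2 with ht
  simp only [Complex.sq_norm, normSq_apply] at ht
  simp only [Complex.sq_norm, normSq_apply, sub_re, sub_im, mul_re, mul_im, conj_re, conj_im,
    div_ofReal_re, div_ofReal_im, one_re, one_im]
  field_simp
  rw [ht]
  ring

end Complex

theorem mmse_rate_representation_general {K : ℕ} (g : Fin K → ℂ)
    (σsq : ℝ) (hσ : 0 < σsq) (k : Fin K)
    (E : ℂ → ℝ)
    (hE : ∀ u : ℂ, E u =
      ‖u‖ ^ 2 * ((∑ j ∈ Finset.univ.erase k, ‖g j‖ ^ 2) + σsq)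
        + ‖(starRingEnd ℂ) u * g k - 1‖ ^ 2)
    (ustar : ℂ) (hustar : ustar = g k / (((∑ j : Fin K, ‖g j‖ ^ 2) + σsq : ℝ) : ℂ))
    (Wstar : ℝ) (hWstar : Wstar = (E ustar)⁻¹) :
    Real.logb 2 (1 + ‖g k‖ ^ 2 / ((∑ j ∈ Finset.univ.erase k, ‖g j‖ ^ 2) + σsq))
        = (1 / Real.log 2) * (Real.log Wstar - Wstar * E ustar + 1) ∧
    IsGreatest {y : ℝ | ∃ W : ℝ, 0 < W ∧ ∃ u : ℂ, y = Real.log W - W * E u + 1}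
      (Real.log Wstar - Wstar * E ustar + 1) := by
  set S := (∑ j ∈ Finset.univ.erase k, ‖g j‖ ^ 2) + σsq
  have hS : 0 < S := by positivity
  have hT : (∑ j : Fin K, ‖g j‖ ^ 2) + σsq = S + ‖g k‖ ^ 2 := by
    rw [← Finset.sum_erase_add _ _ (Finset.mem_univ k)]
    ring
  have hST : 0 < S + ‖g k‖ ^ 2 := by positivity
  have hE' : ∀ u, E u = (S + ‖g k‖ ^ 2) * ‖u - ustar‖ ^ 2 + S / (S + ‖g k‖ ^ 2) := fun u => by
    rw [hE, hustar, hT]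
    exact Complex.norm_sq_mul_add_norm_conj_mul_sub_one_sq S (g k) u hST.ne'
  have hEstar : E ustar = S / (S + ‖g k‖ ^ 2) := by simpa using hE' ustar
  have hmin : ∀ u, E ustar ≤ E u := fun u => by
    rw [hEstar, hE' u]
    have := mul_nonneg hST.le (sq_nonneg ‖u - ustar‖)
    linarith
  have hEpos : 0 < E ustar := hEstar ▸ div_pos hS hST
  subst hWstar
  refine ⟨?_, Real.isGreatest_log_sub_mul_add_one E hEpos hmin⟩
  rw [Real.log_inv_sub_inv_mul_add_one hEpos.ne', hEstar, Real.logb, ← Real.log_inv,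
    inv_div, add_div' _ _ _ hS.ne', one_mul, div_eq_mul_one_div, mul_comm]

/-- MMSE rate representation: the rate `log₂(1 + SINRₖ)` equals
`(1/ln 2) · sup_{W>0, u∈ℂ} (ln W − W·E(u) + 1)`, attained at
`u* = gₖ/(∑ⱼ|gⱼ|² + σ²)` and `W* = E(u*)⁻¹`. -/
theorem mmse_rate_representation {K : ℕ} (hK : 0 < K) (g : Fin K → ℂ)
    (σsq : ℝ) (hσ : 0 < σsq) (k : Fin K)
    (E : ℂ → ℝ)
    (hE : ∀ u : ℂ, E u =
      ‖u‖ ^ 2 * ((∑ j ∈ Finset.univ.erase k, ‖g j‖ ^ 2) + σsq)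
        + ‖(starRingEnd ℂ) u * g k - 1‖ ^ 2)
    (ustar : ℂ) (hustar : ustar = g k / (((∑ j : Fin K, ‖g j‖ ^ 2) + σsq : ℝ) : ℂ))
    (Wstar : ℝ) (hWstar : Wstar = (E ustar)⁻¹) :
    Real.logb 2 (1 + ‖g k‖ ^ 2 / ((∑ j ∈ Finset.univ.erase k, ‖g j‖ ^ 2) + σsq))
        = (1 / Real.log 2) * (Real.log Wstar - Wstar * E ustar + 1) ∧
    IsGreatest {y : ℝ | ∃ W : ℝ, 0 < W ∧ ∃ u : ℂ, y = Real.log W - W * E u + 1}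
      (Real.log Wstar - Wstar * E ustar + 1) :=
  mmse_rate_representation_general g σsq hσ k E hE ustar hustar Wstar hWstar
end
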